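/- arXiv:1112.0856 — 2 statements merged into one kernel-verified Lean document; each statement's English description precedes it below -/
import Mathlib

section
/- Let W be a finite Coxeter group. If K is a modular reflection subgroup of W and H is a modular subgroup of the Coxeter group K, then H is a modular subgroup of W. -/
/-!
Statement 1: Let W be a finite Coxeter group.  If K is a modular reflection subgroup of W
and H is a modular subgroup of the Coxeter group K, then H is a modular subgroup of W.

(For finite W, the absolute length of a reflection subgroup K with respect to its own set
of reflections T ∩ K coincides with the restriction of ℓ_T to K, so the absolute order on
K is the order induced from Abs(W); modularity of H in K is expressed accordingly.)
-/

/-- The absolute length of `w` with respect to a set `T`: the minimum length of a word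
for `w` in the alphabet `T`. -/
noncomputable def absLength {W : Type*} [Group W] (T : Set W) (w : W) : ℕ :=
  sInf {n | ∃ l : List W, (∀ t ∈ l, t ∈ T) ∧ l.prod = w ∧ l.length = n}

/-- The absolute order: `u ≤_T v` iff `ℓ_T(u) + ℓ_T(v u⁻¹) = ℓ_T(v)`. -/
def absLe {W : Type*} [Group W] (T : Set W) (u v : W) : Prop :=
  absLength T u + absLength T (v * u⁻¹) = absLength T v

/-- `H` is a modular subgroup of the subgroup `K` (with the order induced from the absolute
order on the ambient group): every left coset of `H` in `K` has a minimum element. -/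
def IsModularSubgroupIn {W : Type*} [Group W] (T : Set W) (H K : Subgroup W) : Prop :=
  ∀ k ∈ K, ∃ m : W, k⁻¹ * m ∈ H ∧ ∀ u : W, k⁻¹ * u ∈ H → absLe T m u

/-!
The absolute length is subadditive and invariant under conjugation, hence
`ℓ_T(u m⁻¹) = ℓ_T(m⁻¹ u)`. It follows that `m ≤_T u` and `m' ≤_T m⁻¹ u` imply `m m' ≤_T u`.
So if `m` is the minimum of the coset `wK` and `m'` is the minimum of the coset `(m⁻¹ w) H`
of `H` in `K`, then `m m'` is the minimum of `wH`.
-/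

section AbsLength

variable {W : Type*} [Group W] {T : Set W}

lemma absLength_prod_le_length {l : List W} (hl : ∀ t ∈ l, t ∈ T) :
    absLength T l.prod ≤ l.length :=
  Nat.sInf_le ⟨l, hl, rfl, rfl⟩

lemma exists_list_length_eq_absLength (hT : Submonoid.closure T = ⊤) (w : W) :
    ∃ l : List W, (∀ t ∈ l, t ∈ T) ∧ l.prod = w ∧ l.length = absLength T w := by
  obtain ⟨l, hl, rfl⟩ := Submonoid.exists_list_of_mem_closure (hT ▸ Submonoid.mem_top w)
  exact Nat.sInf_mem (s := {n | ∃ l' : List W, (∀ t ∈ l', t ∈ T) ∧ l'.prod = l.prod ∧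
    l'.length = n}) ⟨l.length, l, hl, rfl, rfl⟩

lemma absLength_mul_le (hT : Submonoid.closure T = ⊤) (x y : W) :
    absLength T (x * y) ≤ absLength T x + absLength T y := by
  obtain ⟨lx, hlx, rfl, hx⟩ := exists_list_length_eq_absLength hT x
  obtain ⟨ly, hly, rfl, hy⟩ := exists_list_length_eq_absLength hT y
  calc absLength T (lx.prod * ly.prod) = absLength T (lx ++ ly).prod := by rw [List.prod_append]
    _ ≤ (lx ++ ly).length :=
        absLength_prod_le_length fun t ht => (List.mem_append.1 ht).elim (hlx t) (hly t)
    _ = absLength T lx.prod + absLength T ly.prod := by rw [List.length_append, hx, hy]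

lemma absLength_conj_le (hT : Submonoid.closure T = ⊤)
    (hconj : ∀ w : W, ∀ t ∈ T, w * t * w⁻¹ ∈ T) (w x : W) :
    absLength T (w * x * w⁻¹) ≤ absLength T x := by
  obtain ⟨l, hl, rfl, hx⟩ := exists_list_length_eq_absLength hT x
  calc absLength T (w * l.prod * w⁻¹) = absLength T (l.map (MulAut.conj w)).prod := by
        rw [← map_list_prod, MulAut.conj_apply]
    _ ≤ (l.map (MulAut.conj w)).length :=
        absLength_prod_le_length (by simpa using fun t ht => hconj w t (hl t ht))
    _ = absLength T l.prod := by rw [List.length_map, hx]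

lemma absLength_conj (hT : Submonoid.closure T = ⊤)
    (hconj : ∀ w : W, ∀ t ∈ T, w * t * w⁻¹ ∈ T) (w x : W) :
    absLength T (w * x * w⁻¹) = absLength T x := by
  refine le_antisymm (absLength_conj_le hT hconj w x) ?_
  simpa [mul_assoc] using absLength_conj_le hT hconj w⁻¹ (w * x * w⁻¹)

lemma absLength_mul_comm (hT : Submonoid.closure T = ⊤)
    (hconj : ∀ w : W, ∀ t ∈ T, w * t * w⁻¹ ∈ T) (x y : W) :
    absLength T (x * y) = absLength T (y * x) := by
  simpa [mul_assoc] using (absLength_conj hT hconj y (x * y)).symm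

lemma absLe_mul_of_absLe_inv_mul (hT : Submonoid.closure T = ⊤)
    (hconj : ∀ w : W, ∀ t ∈ T, w * t * w⁻¹ ∈ T) {m m' u : W}
    (hm : absLe T m u) (hm' : absLe T m' (m⁻¹ * u)) : absLe T (m * m') u := by
  unfold absLe at hm hm' ⊢
  have hrest : absLength T (u * (m * m')⁻¹) = absLength T (m⁻¹ * u * m'⁻¹) := by
    rw [mul_inv_rev, ← mul_assoc, absLength_mul_comm hT hconj, ← mul_assoc]
  have hu : absLength T u =
      absLength T m + absLength T m' + absLength T (m⁻¹ * u * m'⁻¹) := by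
    rw [← hm, absLength_mul_comm hT hconj, ← hm', add_assoc]
  apply le_antisymm
  · rw [hrest, hu]
    exact Nat.add_le_add_right (absLength_mul_le hT m m') _
  · calc absLength T u = absLength T (u * (m * m')⁻¹ * (m * m')) := by rw [inv_mul_cancel_right]
      _ ≤ _ := absLength_mul_le hT _ _
      _ = _ := add_comm _ _

end AbsLength

theorem IsModularSubgroupIn.trans {W : Type*} [Group W] {T : Set W} {H K L : Subgroup W}
    (hT : Submonoid.closure T = ⊤) (hconj : ∀ w : W, ∀ t ∈ T, w * t * w⁻¹ ∈ T)
    (hKL : IsModularSubgroupIn T K L) (hHK : H ≤ K) (hHmod : IsModularSubgroupIn T H K) :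
    IsModularSubgroupIn T H L := by
  intro w hw
  obtain ⟨m, hmK, hm_min⟩ := hKL w hw
  obtain ⟨m', hm'H, hm'_min⟩ := hHmod (m⁻¹ * w) (by simpa using K.inv_mem hmK)
  refine ⟨m * m', by simpa [mul_assoc] using hm'H, fun u hu => ?_⟩
  refine absLe_mul_of_absLe_inv_mul hT hconj (hm_min u (hHK hu)) (hm'_min _ ?_)
  simpa [mul_assoc] using hu

theorem CoxeterSystem.submonoid_closure_setOf_isReflection {B W : Type*} [Group W]
    {M : CoxeterMatrix B} (cs : CoxeterSystem M W) :
    Submonoid.closure {t | cs.IsReflection t} = ⊤ :=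
  top_unique <| cs.submonoid_closure_range_simple ▸
    Submonoid.closure_mono (Set.range_subset_iff.2 cs.isReflection_simple)

theorem modular_transitivity_general {B W : Type*} [Group W]
    {M : CoxeterMatrix B} (cs : CoxeterSystem M W)
    (T : Set W) (hT : T = {t | cs.IsReflection t})
    (K H : Subgroup W)
    (hKmod : IsModularSubgroupIn T K ⊤)
    (hHK : H ≤ K)
    (hHmodK : IsModularSubgroupIn T H K) :
    IsModularSubgroupIn T H ⊤ := by
  subst hT
  exact IsModularSubgroupIn.trans cs.submonoid_closure_setOf_isReflection
    (fun w _ ht => ht.conj w) hKmod hHK hHmodK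

theorem modular_transitivity {B W : Type*} [Group W] [Fintype W]
    {M : CoxeterMatrix B} (cs : CoxeterSystem M W)
    (T : Set W) (hT : T = {t | cs.IsReflection t})
    (K H : Subgroup W)
    (hKrefl : ∃ R ⊆ T, K = Subgroup.closure R)
    (hKmod : IsModularSubgroupIn T K ⊤)
    (hHK : H ≤ K)
    (hHmodK : IsModularSubgroupIn T H K) :
    IsModularSubgroupIn T H ⊤ :=
  modular_transitivity_general cs T hT K H hKmod hHK hHmodK
end

section
/- Let (W,S) be a finite Coxeter system with set of reflections T, alternating subgroup W^+, Coxeter rank d and exponents 1 = e_1, e_2, …, e_d, and fix s_0 ∈ S with T_0 = {s_0 t : t ∈ T}. Then Σ_{w ∈ W^+} q^{ℓ_{T_0}(w)} = W_T(q)/(1+q) = ∏_{i=2}^{d} (1 + e_i q), where W_T(q) = Σ_{w∈W} q^{ℓ_T(w)} = ∏_{i=1}^{d} (1 + e_i q). -/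
attribute [local instance] Classical.propDecidable

/-- The set of reflections `T` of a Coxeter system. -/
def reflSet {B W : Type*} [Group W] {M : CoxeterMatrix B} (cs : CoxeterSystem M W) :
    Set W := {t | cs.IsReflection t}

/-- The set `T₀ = {s₀ t : t ∈ T}`. -/
def tZero {B W : Type*} [Group W] {M : CoxeterMatrix B} (cs : CoxeterSystem M W)
    (i₀ : B) : Set W := {w | ∃ t, cs.IsReflection t ∧ w = cs.simple i₀ * t}

/-- The alternating subgroup `W⁺` of a Coxeter system: the kernel of the sign character
(which maps every simple reflection to `−1`). -/
def alternating {B W : Type*} [Group W] {M : CoxeterMatrix B} (cs : CoxeterSystem M W) :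
    Subgroup W := cs.lengthParity.ker


/-!
Write `s = s₀`. Conjugating the letters, a word `(s t₁) ⋯ (s tₙ)` in `T₀` equals `sⁿ t₁' ⋯ tₙ'`
for a word `t₁' ⋯ tₙ'` in `T`, and conversely. Every `T`-word for `w` has the parity of `w`, so
for `w ∈ W⁺` the `T₀`-words for `w` have the lengths of the `T`-words for `w` or for `s w`, whence
`ℓ_{T₀}(w) = min (ℓ_T(w), ℓ_T(s w))`. These two lengths differ by exactly one, so
`(1 + q) q^{ℓ_{T₀}(w)} = q^{ℓ_T(w)} + q^{ℓ_T(s w)}`; since `w ↦ s w` maps `W⁺` onto `W ∖ W⁺`,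
summing over `W⁺` gives `W_T(q)`.
-/

open Pointwise

section WordLengths

variable {G : Type*} [Group G]

def wordLengths (T : Set G) (w : G) : Set ℕ :=
  {n | ∃ l : List G, (∀ t ∈ l, t ∈ T) ∧ l.prod = w ∧ l.length = n}

theorem absLength_eq_sInf_wordLengths (T : Set G) (w : G) :
    absLength T w = sInf (wordLengths T w) :=
  rfl

theorem absLength_mul_le_s19 {T : Set G} {t w : G} (ht : t ∈ T) (hw : (wordLengths T w).Nonempty) :
    absLength T (t * w) ≤ absLength T w + 1 := by
  obtain ⟨l, hl, rfl, hlen⟩ := Nat.sInf_mem hw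
  have hword : l.length + 1 ∈ wordLengths T (t * l.prod) := by
    refine ⟨t :: l, ?_, List.prod_cons, List.length_cons⟩
    simpa only [List.mem_cons, forall_eq_or_imp] using ⟨ht, hl⟩
  rw [absLength_eq_sInf_wordLengths, absLength_eq_sInf_wordLengths, ← hlen]
  exact Nat.sInf_le hword

variable {T : Set G} (hT : ∀ g : G, ∀ t ∈ T, g * t * g⁻¹ ∈ T) (s : G)
include hT

theorem exists_smul_word_of_word (l : List G) (hl : ∀ t ∈ l, t ∈ T) :
    ∃ l' : List G, (∀ x ∈ l', x ∈ s • T) ∧ l'.length = l.length ∧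
      l'.prod = s ^ l.length * l.prod := by
  induction l with
  | nil => exact ⟨[], by simp, rfl, by simp⟩
  | cons t l ih =>
    simp only [List.mem_cons, forall_eq_or_imp] at hl
    obtain ⟨l', hl', hlen, hprod⟩ := ih hl.2
    refine ⟨s * (s ^ l.length * t * (s ^ l.length)⁻¹) :: l', ?_, by simp [hlen], ?_⟩
    · simp only [List.mem_cons, forall_eq_or_imp]
      exact ⟨Set.smul_mem_smul_set (hT _ t hl.1), hl'⟩
    · rw [List.prod_cons, List.prod_cons, hprod, List.length_cons, pow_succ']
      group

theorem exists_word_of_smul_word (l' : List G) (hl' : ∀ x ∈ l', x ∈ s • T) :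
    ∃ l : List G, (∀ t ∈ l, t ∈ T) ∧ l.length = l'.length ∧
      l'.prod = s ^ l'.length * l.prod := by
  induction l' with
  | nil => exact ⟨[], by simp, rfl, by simp⟩
  | cons x l' ih =>
    simp only [List.mem_cons, forall_eq_or_imp] at hl'
    obtain ⟨⟨t, ht, rfl⟩, hl'⟩ := hl'
    obtain ⟨l, hl, hlen, hprod⟩ := ih hl'
    refine ⟨(s ^ l'.length)⁻¹ * t * s ^ l'.length :: l, ?_, by simp [hlen], ?_⟩
    · simp only [List.mem_cons, forall_eq_or_imp]
      exact ⟨by simpa using hT (s ^ l'.length)⁻¹ t ht, hl⟩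
    · simp only [List.prod_cons, hprod, List.length_cons, pow_succ', smul_eq_mul]
      group

theorem mem_wordLengths_smul_iff (w : G) (n : ℕ) :
    n ∈ wordLengths (s • T) (s ^ n * w) ↔ n ∈ wordLengths T w := by
  constructor
  · rintro ⟨l', hl', hprod, rfl⟩
    obtain ⟨l, hl, hlen, hprod'⟩ := exists_word_of_smul_word hT s l' hl'
    exact ⟨l, hl, mul_left_cancel (hprod'.symm.trans hprod), hlen⟩
  · rintro ⟨l, hl, rfl, rfl⟩
    obtain ⟨l', hl', hlen, hprod⟩ := exists_smul_word_of_word hT s l hl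
    exact ⟨l', hl', hprod, hlen⟩

theorem mem_wordLengths_smul_iff_of_mul_self (hs : s * s = 1) (w : G) (n : ℕ) :
    n ∈ wordLengths (s • T) w ↔
      Even n ∧ n ∈ wordLengths T w ∨ Odd n ∧ n ∈ wordLengths T (s * w) := by
  rcases n.even_or_odd with ⟨k, rfl⟩ | ⟨k, rfl⟩
  · have hpow : s ^ (k + k) = 1 := by rw [← two_mul, pow_mul, sq, hs, one_pow]
    have := mem_wordLengths_smul_iff hT s w (k + k)
    rw [hpow, one_mul] at this
    simp [this, Nat.not_odd_iff_even.mpr ⟨k, rfl⟩]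
  · have hpow : s ^ (2 * k + 1) = s := by rw [pow_succ, pow_mul, sq, hs, one_pow, one_mul]
    have := mem_wordLengths_smul_iff hT s (s * w) (2 * k + 1)
    rw [hpow, ← mul_assoc, hs, one_mul] at this
    simp [this, Nat.not_even_iff_odd.mpr (odd_two_mul_add_one k)]

end WordLengths

theorem Subgroup.sum_filter_add_mul_of_mul_mem_iff {G M : Type*} [Group G] [Fintype G]
    [AddCommMonoid M] {H : Subgroup G} {g : G} (hg : ∀ w, g * w ∈ H ↔ w ∉ H) (f : G → M) :
    ∑ w ∈ Finset.univ.filter (· ∈ H), (f w + f (g * w)) = ∑ w, f w := by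
  rw [Finset.sum_add_distrib, ← Finset.sum_filter_add_sum_filter_not Finset.univ (· ∈ H) f]
  congr 1
  refine Finset.sum_equiv (Equiv.mulLeft g) (fun w => ?_) (fun _ _ => rfl)
  simp only [Finset.mem_filter, Finset.mem_univ, true_and, Equiv.coe_mulLeft, hg,
    not_not]

theorem one_add_mul_pow_min {R : Type*} [CommSemiring R] (x : R) {a b : ℕ}
    (h : a + 1 = b ∨ b + 1 = a) : (1 + x) * x ^ min a b = x ^ a + x ^ b := by
  rcases h with rfl | rfl
  · rw [min_eq_left (Nat.le_succ a)]; ring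
  · rw [min_eq_right (Nat.le_succ b)]; ring

namespace CoxeterSystem

variable {B W : Type*} [Group W] {M : CoxeterMatrix B} (cs : CoxeterSystem M W)

theorem wordLengths_reflSet_nonempty (w : W) : (wordLengths (reflSet cs) w).Nonempty := by
  obtain ⟨ω, -, rfl⟩ := cs.exists_isReduced w
  refine ⟨_, ω.map cs.simple, ?_, rfl, rfl⟩
  exact List.forall_mem_map.mpr fun i _ => cs.isReflection_simple i

theorem lengthParity_eq_ofAdd_of_mem_wordLengths {w : W} {n : ℕ}
    (hn : n ∈ wordLengths (reflSet cs) w) :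
    cs.lengthParity w = Multiplicative.ofAdd (n : ZMod 2) := by
  obtain ⟨l, hl, rfl, rfl⟩ := hn
  have hrefl : ∀ x ∈ l.map cs.lengthParity, x = Multiplicative.ofAdd 1 := by
    simp only [List.forall_mem_map]
    intro t ht
    rw [lengthParity_eq_ofAdd_length, ZMod.natCast_eq_one_iff_odd.mpr (hl t ht).odd_length]
  rw [map_list_prod, List.prod_eq_pow_card _ _ hrefl, List.length_map, ← ofAdd_nsmul,
    nsmul_one]

theorem lengthParity_eq_ofAdd_absLength (w : W) :
    cs.lengthParity w = Multiplicative.ofAdd (absLength (reflSet cs) w : ZMod 2) :=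
  cs.lengthParity_eq_ofAdd_of_mem_wordLengths (Nat.sInf_mem (cs.wordLengths_reflSet_nonempty w))

theorem absLength_reflSet_mul {t : W} (ht : cs.IsReflection t) (w : W) :
    absLength (reflSet cs) (t * w) + 1 = absLength (reflSet cs) w ∨
      absLength (reflSet cs) w + 1 = absLength (reflSet cs) (t * w) := by
  have hle := absLength_mul_le_s19 (T := reflSet cs) ht (cs.wordLengths_reflSet_nonempty w)
  have hge := absLength_mul_le_s19 (T := reflSet cs) ht (cs.wordLengths_reflSet_nonempty (t * w))
  rw [← mul_assoc, ht.mul_self, one_mul] at hge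
  have hne : absLength (reflSet cs) (t * w) ≠ absLength (reflSet cs) w := by
    intro h
    have hpar := map_mul cs.lengthParity t w
    rw [cs.lengthParity_eq_ofAdd_absLength (t * w), cs.lengthParity_eq_ofAdd_absLength w, h,
      cs.lengthParity_eq_ofAdd_length t, ZMod.natCast_eq_one_iff_odd.mpr ht.odd_length] at hpar
    simp at hpar
  omega

theorem simple_mul_mem_alternating_iff (i : B) {w : W} :
    cs.simple i * w ∈ alternating cs ↔ w ∉ alternating cs := by
  rw [alternating, MonoidHom.mem_ker, MonoidHom.mem_ker, map_mul, lengthParity_simple]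
  generalize cs.lengthParity w = x
  revert x
  decide

theorem mem_alternating_iff_even {w : W} {n : ℕ} (hn : n ∈ wordLengths (reflSet cs) w) :
    w ∈ alternating cs ↔ Even n := by
  rw [alternating, MonoidHom.mem_ker, cs.lengthParity_eq_ofAdd_of_mem_wordLengths hn,
    ← ofAdd_zero, Multiplicative.ofAdd.injective.eq_iff, ZMod.natCast_eq_zero_iff_even]

theorem tZero_eq_smul (i : B) : tZero cs i = cs.simple i • reflSet cs := by
  ext w
  simp [tZero, reflSet, Set.mem_smul_set, eq_comm]

theorem wordLengths_tZero (i : B) {w : W} (hw : w ∈ alternating cs) :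
    wordLengths (tZero cs i) w =
      wordLengths (reflSet cs) w ∪ wordLengths (reflSet cs) (cs.simple i * w) := by
  ext n
  rw [tZero_eq_smul, mem_wordLengths_smul_iff_of_mul_self (fun g t ht => ht.conj g)
    (cs.simple i) (cs.simple_mul_simple_self i)]
  have h_even : n ∈ wordLengths (reflSet cs) w → Even n :=
    fun hn => (cs.mem_alternating_iff_even hn).mp hw
  have h_odd : n ∈ wordLengths (reflSet cs) (cs.simple i * w) → Odd n := fun hn =>
    Nat.not_even_iff_odd.mp fun he =>
      (cs.simple_mul_mem_alternating_iff i).mp ((cs.mem_alternating_iff_even hn).mpr he) hw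
  rw [Set.mem_union, and_iff_right_of_imp h_even, and_iff_right_of_imp h_odd]

theorem absLength_tZero (i : B) {w : W} (hw : w ∈ alternating cs) :
    absLength (tZero cs i) w =
      min (absLength (reflSet cs) w) (absLength (reflSet cs) (cs.simple i * w)) := by
  rw [absLength_eq_sInf_wordLengths, cs.wordLengths_tZero i hw,
    csInf_union (OrderBot.bddBelow _) (cs.wordLengths_reflSet_nonempty _)
      (OrderBot.bddBelow _) (cs.wordLengths_reflSet_nonempty _)]
  rfl

theorem one_add_mul_pow_absLength_tZero {R : Type*} [CommSemiring R] (x : R) (i : B) {w : W}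
    (hw : w ∈ alternating cs) :
    (1 + x) * x ^ absLength (tZero cs i) w =
      x ^ absLength (reflSet cs) w + x ^ absLength (reflSet cs) (cs.simple i * w) := by
  rw [cs.absLength_tZero i hw]
  exact one_add_mul_pow_min x ((cs.absLength_reflSet_mul (cs.isReflection_simple i) w).symm)

end CoxeterSystem

theorem rank_gen_of_alternating_general {B W : Type*} [Group W] [Fintype W] [Fintype B]
    {M : CoxeterMatrix B} (cs : CoxeterSystem M W) (i₀ : B)
    (d : ℕ) (hd : d = Fintype.card B)  -- d is the Coxeter rank of W
    (e : ℕ → ℕ)  -- the exponents e₁, e₂, …, e_d of W (indexed by 0, …, d−1)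
    (h1 : e 0 = 1)
    (hWT : (∑ w : W, (Polynomial.X : Polynomial ℤ) ^ absLength (reflSet cs) w) =
      ∏ i ∈ Finset.range d, (1 + Polynomial.C (e i : ℤ) * Polynomial.X)) :
    (1 + Polynomial.X) *
        (∑ w ∈ Finset.univ.filter (fun w : W => w ∈ alternating cs),
          (Polynomial.X : Polynomial ℤ) ^ absLength (tZero cs i₀) w) =
      (∑ w : W, (Polynomial.X : Polynomial ℤ) ^ absLength (reflSet cs) w) ∧
    (∑ w ∈ Finset.univ.filter (fun w : W => w ∈ alternating cs),
        (Polynomial.X : Polynomial ℤ) ^ absLength (tZero cs i₀) w) =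
      ∏ i ∈ Finset.Ico 1 d, (1 + Polynomial.C (e i : ℤ) * Polynomial.X) := by
  have h_mul : (1 + Polynomial.X) *
      (∑ w ∈ Finset.univ.filter (fun w : W => w ∈ alternating cs),
        (Polynomial.X : Polynomial ℤ) ^ absLength (tZero cs i₀) w) =
      ∑ w : W, (Polynomial.X : Polynomial ℤ) ^ absLength (reflSet cs) w := by
    rw [Finset.mul_sum, Finset.sum_congr rfl fun w hw =>
      cs.one_add_mul_pow_absLength_tZero _ i₀ (Finset.mem_filter.mp hw).2]
    exact Subgroup.sum_filter_add_mul_of_mul_mem_iff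
      (fun w => cs.simple_mul_mem_alternating_iff i₀) _
  refine ⟨h_mul, mul_left_cancel₀ (a := (1 + Polynomial.X : Polynomial ℤ)) ?_ ?_⟩
  · simpa [add_comm] using Polynomial.X_add_C_ne_zero (1 : ℤ)
  have hd_pos : 0 < d := hd ▸ Fintype.card_pos_iff.mpr ⟨i₀⟩
  rw [h_mul, hWT, Finset.prod_range_eq_mul_Ico _ hd_pos, h1, Nat.cast_one, map_one, one_mul]

theorem rank_gen_of_alternating {B W : Type*} [Group W] [Fintype W] [Fintype B]
    {M : CoxeterMatrix B} (cs : CoxeterSystem M W) (i₀ : B)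
    (d : ℕ) (hd : d = Fintype.card B)  -- d is the Coxeter rank of W
    (e : ℕ → ℕ)  -- the exponents e₁, e₂, …, e_d of W (indexed by 0, …, d−1)
    (hmono : ∀ i j, i ≤ j → j < d → e i ≤ e j) (h1 : e 0 = 1)
    (hWT : (∑ w : W, (Polynomial.X : Polynomial ℤ) ^ absLength (reflSet cs) w) =
      ∏ i ∈ Finset.range d, (1 + Polynomial.C (e i : ℤ) * Polynomial.X)) :
    (1 + Polynomial.X) *
        (∑ w ∈ Finset.univ.filter (fun w : W => w ∈ alternating cs),
          (Polynomial.X : Polynomial ℤ) ^ absLength (tZero cs i₀) w) =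
      (∑ w : W, (Polynomial.X : Polynomial ℤ) ^ absLength (reflSet cs) w) ∧
    (∑ w ∈ Finset.univ.filter (fun w : W => w ∈ alternating cs),
        (Polynomial.X : Polynomial ℤ) ^ absLength (tZero cs i₀) w) =
      ∏ i ∈ Finset.Ico 1 d, (1 + Polynomial.C (e i : ℤ) * Polynomial.X) :=
  rank_gen_of_alternating_general cs i₀ d hd e h1 hWT
end
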